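/- arXiv:1111.0784 — 2 statements merged into one kernel-verified Lean document; each statement's English description precedes it below -/
import Mathlib

section
/- If a regular language L over a finite alphabet A is not star-free, then there exist fixed words u, v, w in A* such that for every N in the natural numbers there exists n > N with u v^n w in L but u v^(n+1) w not in L. -/
/-- Star-free languages over an alphabet `A`: the closure of the finite
languages under concatenation, union, intersection, and complementation. -/
inductive StarFree {A : Type*} : Language A → Prop
  | finite (L : Language A) : L.Finite → StarFree L
  | concat (L₁ L₂ : Language A) : StarFree L₁ → StarFree L₂ → StarFree (L₁ * L₂)
  | union (L₁ L₂ : Language A) : StarFree L₁ → StarFree L₂ → StarFree (L₁ ⊔ L₂)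
  | inter (L₁ L₂ : Language A) : StarFree L₁ → StarFree L₂ → StarFree (L₁ ⊓ L₂)
  | compl (L : Language A) : StarFree L → StarFree Lᶜ

/-- `wpow v n` is the word `v` concatenated with itself `n` times. -/
def wpow {A : Type*} (v : List A) : ℕ → List A
  | 0 => []
  | n + 1 => v ++ wpow v n

/-!
Contrapositive. If for all `u, v, w` membership of `u vⁿ w` in `L` is eventually monotone in `n`,
then the syntactic monoid of `L` is aperiodic: the class of `vⁿ` is eventually periodic in `n`,
and an eventually periodic, eventually monotone sequence of truth values is eventually constant.

Schützenberger's theorem then makes `L` star-free. For a morphism `φ` into a finite aperiodic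
monoid the fibre of `m` is star-free by induction along the `J`-order: `φ x = m` is equivalent to
the conjunction of three star-free conditions built from fibres strictly `J`-above `m`, namely
`m ∣ φ x` (detected by the first prefix of `x` whose image lies in `mM`), `m ∣ᵣ φ x` (the mirror
image under word reversal) and `φ x ∣ⱼ m` (checked on letters and on minimal violating factors
`a v b`). Stability of finite monoids and `H`-triviality of aperiodic ones close the argument.
-/

open MulOpposite

section TwoSidedDvd

variable {M : Type*} [Monoid M]

def TwoSidedDvd (a b : M) : Prop := ∃ c d, b = c * a * d

infix:50 " ∣ⱼ " => TwoSidedDvd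

theorem TwoSidedDvd.trans {a b c : M} : a ∣ⱼ b → b ∣ⱼ c → a ∣ⱼ c
  | ⟨p, q, hb⟩, ⟨r, s, hc⟩ => ⟨r * p, q * s, by rw [hc, hb]; simp only [mul_assoc]⟩

theorem Dvd.dvd.twoSidedDvd {a b : M} : a ∣ b → a ∣ⱼ b
  | ⟨c, hc⟩ => ⟨1, c, by rw [hc, one_mul]⟩

theorem one_twoSidedDvd (a : M) : 1 ∣ⱼ a := ⟨a, 1, by simp⟩

theorem twoSidedDvd_mul_left (a b : M) : b ∣ⱼ a * b := ⟨a, 1, by simp⟩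

theorem op_twoSidedDvd_op {a b : M} : op a ∣ⱼ op b ↔ a ∣ⱼ b := by
  constructor
  · rintro ⟨c, d, h⟩
    exact ⟨d.unop, c.unop, by simpa [mul_assoc] using congrArg unop h⟩
  · rintro ⟨c, d, h⟩
    exact ⟨op d, op c, by simp [h, mul_assoc]⟩

end TwoSidedDvd

section FiniteMonoid

variable {M : Type*} [Monoid M]

theorem eq_pow_mul_mul_pow {p y q : M} (h : y = p * y * q) (k : ℕ) :
    y = p ^ k * y * q ^ k := by
  induction k with
  | zero => simp
  | succ k ih =>
    calc y = p ^ k * (p * y * q) * q ^ k := by rw [← h, ← ih]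
      _ = p ^ (k + 1) * y * q ^ (k + 1) := by rw [pow_succ p, pow_succ' q]; simp only [mul_assoc]

theorem pow_add_mul_eq_pow {x : M} {i p : ℕ} (h : x ^ (i + p) = x ^ i) {n : ℕ} (hn : i ≤ n)
    (t : ℕ) : x ^ (n + p * t) = x ^ n := by
  obtain ⟨d, rfl⟩ := Nat.exists_eq_add_of_le hn
  induction t with
  | zero => simp
  | succ t ih =>
    calc x ^ (i + d + p * (t + 1)) = x ^ (i + p) * x ^ (d + p * t) := by
          rw [← pow_add]; congr 1; ring
      _ = x ^ (i + d) := by rw [h, ← pow_add, ← add_assoc, ih]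

theorem exists_isIdempotentElem_pow [Finite M] (x : M) : ∃ n ≠ 0, IsIdempotentElem (x ^ n) := by
  obtain ⟨i, j, hne, hij⟩ := Finite.exists_ne_map_eq_of_infinite (x ^ · : ℕ → M)
  wlog hlt : i < j generalizing i j
  · exact this j i hne.symm hij.symm (by omega)
  have hper : x ^ (i + (j - i)) = x ^ i := by rw [Nat.add_sub_cancel' hlt.le]; exact hij.symm
  have hp : 0 < j - i := by omega
  refine ⟨(j - i) * (i + 1), by positivity, ?_⟩
  rw [IsIdempotentElem, ← pow_add]
  exact pow_add_mul_eq_pow hper (by nlinarith) (i + 1)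

/-- Stability of finite monoids: `R`-comparable elements in the same `J`-class are
`R`-equivalent. -/
theorem dvd_of_dvd_of_twoSidedDvd [Finite M] {x y : M} (hyx : y ∣ x) (hxy : x ∣ⱼ y) : x ∣ y := by
  obtain ⟨u, rfl⟩ := hyx
  obtain ⟨p, q, hy⟩ := hxy
  obtain ⟨n, hn, hidem⟩ := exists_isIdempotentElem_pow (u * q)
  have hiter := eq_pow_mul_mul_pow (show y = p * y * (u * q) by simpa [mul_assoc] using hy) n
  have hfix : y * (u * q) ^ n = y := by
    conv_lhs => rw [hiter, mul_assoc, hidem.eq, ← hiter]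
  refine ⟨q * (u * q) ^ (n - 1), ?_⟩
  rw [mul_assoc y, ← mul_assoc u, ← pow_succ', Nat.sub_add_cancel
    (Nat.one_le_iff_ne_zero.2 hn), hfix]

theorem mul_mul_twoSidedDvd [Finite M] {a n b m : M} (han : a * n ∣ⱼ m) (hnb : n * b ∣ⱼ m)
    (hmn : m ∣ⱼ n) : a * n * b ∣ⱼ m := by
  obtain ⟨s, hs⟩ := dvd_of_dvd_of_twoSidedDvd (dvd_mul_right n b) (hnb.trans hmn)
  refine Dvd.dvd.twoSidedDvd ⟨s, ?_⟩ |>.trans han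
  conv_lhs => rw [hs]
  simp only [mul_assoc]

end FiniteMonoid

section Aperiodic

def IsAperiodic (M : Type*) [Monoid M] : Prop := ∀ x : M, ∃ n : ℕ, x ^ (n + 1) = x ^ n

variable {M : Type*} [Monoid M]

/-- Aperiodic monoids are `H`-trivial. -/
theorem IsAperiodic.eq_of_dvd_of_rightDvd (hM : IsAperiodic M) {x y : M} (hxy : x ∣ y)
    (hyx : y ∣ᵣ x) : x = y := by
  obtain ⟨u, rfl⟩ := hxy
  obtain ⟨v, hv⟩ := hyx
  obtain ⟨n, hn⟩ := hM u
  have hx := eq_pow_mul_mul_pow (show x = v * x * u by rw [mul_assoc, ← hv]) n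
  calc x = v ^ n * x * u ^ (n + 1) := by rw [hn]; exact hx
    _ = x * u := by rw [pow_succ, ← mul_assoc, ← hx]

end Aperiodic

namespace StarFree

variable {A : Type*}

theorem bot : StarFree (⊥ : Language A) := finite _ Set.finite_empty

theorem top : StarFree (⊤ : Language A) := compl_bot (α := Language A) ▸ compl _ bot

theorem singleton (x : List A) : StarFree ({x} : Language A) :=
  finite _ (Set.finite_singleton x)

theorem iSup {ι : Sort*} [Finite ι] {f : ι → Language A} (h : ∀ i, StarFree (f i)) :
    StarFree (⨆ i, f i) := by
  rw [← sSup_range]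
  refine (Set.finite_range f).induction_on_subset _ (by simpa using bot) ?_
  rintro L K ⟨i, rfl⟩ - - hK
  rw [sSup_insert]
  exact union _ _ (h i) hK

theorem reverse {L : Language A} (h : StarFree L) : StarFree L.reverse := by
  induction h with
  | finite L hL => exact Language.reverse_eq_image L ▸ finite _ (hL.image _)
  | concat L₁ L₂ _ _ h₁ h₂ => exact Language.reverse_mul L₁ L₂ ▸ concat _ _ h₂ h₁
  | union _ _ _ _ h₁ h₂ => exact union _ _ h₁ h₂
  | inter _ _ _ _ h₁ h₂ => exact inter _ _ h₁ h₂
  | compl _ _ h => exact compl _ h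

end StarFree

section Words

variable {A : Type*}

theorem List.exists_first_prefix {P : List A → Prop} (hnil : ¬ P []) {x : List A} (hx : P x) :
    ∃ p a s, x = p ++ a :: s ∧ ¬ P p ∧ P (p ++ [a]) := by
  induction x using List.reverseRecOn with
  | nil => exact absurd hx hnil
  | append_singleton t a ih =>
    by_cases ht : P t
    · obtain ⟨p, b, s, rfl, hp, hpb⟩ := ih ht
      exact ⟨p, b, s ++ [a], by simp, hp, hpb⟩
    · exact ⟨t, a, [], by simp, ht, hx⟩

theorem List.infix_induction {P : List A → Prop} (x : List A) (nil : P [])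
    (letter : ∀ a, [a] <:+: x → P [a])
    (join : ∀ a v b, a :: v ++ [b] <:+: x → P (a :: v) → P (v ++ [b]) → P (a :: v ++ [b])) :
    P x := by
  suffices ∀ n, ∀ y : List A, y.length = n → y <:+: x → P y from this x.length x rfl (infix_refl x)
  intro n
  induction n using Nat.strong_induction_on with
  | _ n ih =>
  rintro (_ | ⟨a, t⟩) hn hy
  · exact nil
  rcases eq_nil_or_concat' t with rfl | ⟨v, b, rfl⟩
  · exact letter a hy
  · simp only [length_cons, length_append] at hn
    refine join a v b (by simpa using hy) (ih _ (by simp; omega) _ rfl ?_)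
      (ih _ (by simp; omega) _ rfl ((suffix_cons a _).isInfix.trans hy))
    exact (prefix_append (a :: v) [b]).isInfix.trans (by simpa using hy)

theorem Language.mem_top_mul_mul_top {K : Language A} {x : List A} :
    x ∈ ⊤ * K * ⊤ ↔ ∃ y ∈ K, y <:+: x := by
  simp only [Language.mem_mul]
  constructor
  · rintro ⟨_, ⟨s, -, y, hy, rfl⟩, t, -, rfl⟩
    exact ⟨y, hy, s, t, rfl⟩
  · rintro ⟨y, hy, s, t, rfl⟩
    exact ⟨s ++ y, ⟨s, trivial, y, hy, rfl⟩, t, trivial, rfl⟩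

theorem toList_pow_eq_wpow (x : FreeMonoid A) : ∀ n, (x ^ n).toList = wpow x.toList n
  | 0 => rfl
  | n + 1 => by rw [pow_succ', FreeMonoid.toList_mul, toList_pow_eq_wpow x n]; rfl

end Words

section Schutzenberger

variable {A M : Type*} [Monoid M]

def fiber (φ : FreeMonoid A →* M) (m : M) : Language A := {x | φ (FreeMonoid.ofList x) = m}

@[simp]
theorem mem_fiber {φ : FreeMonoid A →* M} {m : M} {x : List A} :
    x ∈ fiber φ m ↔ φ (FreeMonoid.ofList x) = m := Iff.rfl

theorem map_twoSidedDvd_of_isInfix (φ : FreeMonoid A →* M) {y x : List A} (h : y <:+: x) :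
    φ (.ofList y) ∣ⱼ φ (.ofList x) := by
  obtain ⟨s, t, rfl⟩ := h
  exact ⟨φ (.ofList s), φ (.ofList t), by simp [mul_assoc]⟩

def reverseHom (φ : FreeMonoid A →* M) : FreeMonoid A →* Mᵐᵒᵖ where
  toFun x := op (φ (.ofList x.toList.reverse))
  map_one' := by simp
  map_mul' x y := by simp

@[simp]
theorem reverseHom_ofList (φ : FreeMonoid A →* M) (x : List A) :
    reverseHom φ (.ofList x) = op (φ (.ofList x.reverse)) := rfl

theorem fiber_reverseHom (φ : FreeMonoid A →* M) (m : M) :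
    fiber (reverseHom φ) (op m) = (fiber φ m).reverse := by
  ext x
  simp [Language.mem_reverse]

theorem starFree_of_forall_fiber [Finite M] {L : Language A} (φ : FreeMonoid A →* M)
    (hsat : ∀ x y, φ (.ofList x) = φ (.ofList y) → x ∈ L → y ∈ L)
    (hfiber : ∀ m, StarFree (fiber φ m)) : StarFree L := by
  have : L = ⨆ (m : M) (_ : ∃ x ∈ L, φ (.ofList x) = m), fiber φ m := by
    ext y
    simp only [Language.mem_iSup, mem_fiber]
    exact ⟨fun hy => ⟨_, ⟨y, hy, rfl⟩, rfl⟩, fun ⟨_, ⟨x, hx, hxm⟩, hym⟩ =>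
      hsat x y (hxm.trans hym.symm) hx⟩
  rw [this]
  exact .iSup fun m => .iSup fun _ => hfiber m

variable [Finite A] [Finite M]

theorem exists_starFree_fiber_subset_dvd (φ : FreeMonoid A →* M) (m : M)
    (ih : ∀ n, n ∣ⱼ m → ¬ m ∣ⱼ n → StarFree (fiber φ n)) :
    ∃ K : Language A, StarFree K ∧ fiber φ m ≤ K ∧ ∀ x ∈ K, m ∣ φ (.ofList x) := by
  by_cases h1 : m ∣ 1
  · exact ⟨⊤, StarFree.top, le_top, fun x _ => h1.trans (one_dvd _)⟩
  let U : Language A := ⨆ (n : M) (a : A) (_ : m ∣ n * φ (.of a) ∧ n * φ (.of a) ∣ m ∧ ¬ m ∣ n),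
    fiber φ n * {[a]}
  refine ⟨U * ⊤, ?_, fun x (hx : x ∈ fiber φ m) => show x ∈ U * ⊤ from ?_, ?_⟩
  · refine .concat _ _ (.iSup fun n => .iSup fun a => .iSup fun ⟨_, hnm, hmn⟩ => ?_) .top
    have hn : n ∣ m := (dvd_mul_right n _).trans hnm
    exact .concat _ _ (ih n hn.twoSidedDvd fun h => hmn (dvd_of_dvd_of_twoSidedDvd hn h))
      (.singleton _)
  · obtain ⟨p, a, s, rfl, hp, hpa⟩ := List.exists_first_prefix (P := fun y => m ∣ φ (.ofList y))
      (by simpa using h1) (show m ∣ φ (.ofList x) from (mem_fiber.1 hx) ▸ dvd_rfl)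
    have hmem : p ++ [a] ∈ U := by
      simp only [U, Language.mem_iSup]
      refine ⟨φ (.ofList p), a, ⟨by simpa using hpa, ⟨φ (.ofList s), ?_⟩, hp⟩,
        Language.append_mem_mul rfl rfl⟩
      simpa [mul_assoc] using hx.symm
    simpa using Language.append_mem_mul hmem (show s ∈ (⊤ : Language A) from trivial)
  · intro x hx
    obtain ⟨y, hy, s, -, rfl⟩ := Language.mem_mul.1 hx
    simp only [U, Language.mem_iSup] at hy
    obtain ⟨_, a, ⟨hdvd, -⟩, p, rfl, _, rfl, rfl⟩ := hy
    simpa [mul_assoc] using hdvd.mul_right (φ (.ofList s))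

theorem exists_starFree_fiber_subset_twoSidedDvd (φ : FreeMonoid A →* M) (m : M)
    (ih : ∀ n, n ∣ⱼ m → ¬ m ∣ⱼ n → StarFree (fiber φ n)) :
    ∃ K : Language A, StarFree K ∧ fiber φ m ≤ K ∧ ∀ x ∈ K, φ (.ofList x) ∣ⱼ m := by
  let C : Language A := ⨆ (a : A) (_ : ¬ φ (.of a) ∣ⱼ m), {[a]}
  let W : Language A := ⨆ (a : A) (n : M) (b : A) (_ : φ (.of a) * n ∣ⱼ m ∧ n * φ (.of b) ∣ⱼ m ∧
    ¬ φ (.of a) * n * φ (.of b) ∣ⱼ m), {[a]} * fiber φ n * {[b]}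
  have hW : StarFree W := by
    refine .iSup fun a => .iSup fun n => .iSup fun b => .iSup fun ⟨han, hnb, hanb⟩ => ?_
    exact .concat _ _ (.concat _ _ (.singleton _) (ih n ((twoSidedDvd_mul_left _ _).trans han)
      fun hmn => hanb (mul_mul_twoSidedDvd han hnb hmn))) (.singleton _)
  have hCW : ∀ y ∈ C ⊔ W, ¬ φ (.ofList y) ∣ⱼ m := by
    intro y hy
    obtain hy | hy : y ∈ C ∨ y ∈ W := hy <;> simp only [C, W, Language.mem_iSup] at hy
    · obtain ⟨a, ha, rfl⟩ := hy
      simpa using ha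
    · obtain ⟨a, n, b, ⟨-, -, hanb⟩, _, ⟨_, rfl, v, rfl, rfl⟩, _, rfl, rfl⟩ := hy
      simpa [mul_assoc] using hanb
  refine ⟨(⊤ * (C ⊔ W) * ⊤)ᶜ, .compl _ (.concat _ _ (.concat _ _ .top
    (.union _ _ (.iSup fun _ => .iSup fun _ => .singleton _) hW)) .top), ?_, ?_⟩
  · intro x (hx : x ∈ fiber φ m) hmem
    obtain ⟨y, hy, hyx⟩ := Language.mem_top_mul_mul_top.1 hmem
    exact hCW y hy (hx ▸ map_twoSidedDvd_of_isInfix φ hyx)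
  · intro x hx
    refine List.infix_induction (P := fun y => φ (.ofList y) ∣ⱼ m) x
      (by simpa using one_twoSidedDvd m) ?_ ?_
    · intro a hax
      by_contra ha
      refine hx (Language.mem_top_mul_mul_top.2 ⟨[a], Or.inl (show [a] ∈ C from ?_), hax⟩)
      simp only [C, Language.mem_iSup]
      exact ⟨a, by simpa using ha, rfl⟩
    · intro a v b hx' hav hvb
      by_contra hanb
      refine hx (Language.mem_top_mul_mul_top.2
        ⟨a :: v ++ [b], Or.inr (show a :: v ++ [b] ∈ W from ?_), hx'⟩)
      simp only [W, Language.mem_iSup]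
      refine ⟨a, φ (.ofList v), b, ⟨by simpa using hav, by simpa using hvb,
        by simpa [mul_assoc] using hanb⟩, ?_⟩
      exact Language.append_mem_mul (Language.append_mem_mul (a := [a]) rfl rfl) rfl

theorem starFree_fiber (hM : IsAperiodic M) (φ : FreeMonoid A →* M) (m : M) :
    StarFree (fiber φ m) := by
  let r : M → M → Prop := fun n m => n ∣ⱼ m ∧ ¬ m ∣ⱼ n
  have : IsTrans M r := ⟨fun _ _ _ hab hbc => ⟨hab.1.trans hbc.1, fun h => hab.2 (hbc.1.trans h)⟩⟩
  have : Std.Irrefl r := ⟨fun _ h => h.2 h.1⟩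
  induction m using (Finite.wellFounded_of_trans_of_irrefl r).induction with
  | _ m ih =>
  have ih' : ∀ n, n ∣ⱼ m → ¬ m ∣ⱼ n → StarFree (fiber φ n) := fun n h h' => ih n ⟨h, h'⟩
  have : Finite Mᵐᵒᵖ := Finite.of_equiv M opEquiv
  obtain ⟨K₁, hK₁, hmK₁, hK₁m⟩ := exists_starFree_fiber_subset_dvd φ m ih'
  obtain ⟨K₂, hK₂, hmK₂, hK₂m⟩ := exists_starFree_fiber_subset_dvd (reverseHom φ) (op m) (by
    intro n h h'
    obtain ⟨n, rfl⟩ := op_surjective n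
    rw [fiber_reverseHom]
    exact (ih' n (op_twoSidedDvd_op.1 h) (mt op_twoSidedDvd_op.2 h')).reverse)
  obtain ⟨K₃, hK₃, hmK₃, hK₃m⟩ := exists_starFree_fiber_subset_twoSidedDvd φ m ih'
  rw [fiber_reverseHom] at hmK₂
  suffices fiber φ m = K₁ ⊓ K₂.reverse ⊓ K₃ by
    rw [this]; exact .inter _ _ (.inter _ _ hK₁ hK₂.reverse) hK₃
  refine le_antisymm (le_inf (le_inf hmK₁ ?_) hmK₃) ?_
  · exact fun x (hx : x ∈ fiber φ m) => show x ∈ K₂.reverse from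
      Language.mem_reverse.2 (hmK₂ (Language.reverse_mem_reverse.2 hx))
  · rintro x ⟨⟨h₁, h₂⟩, h₃⟩
    have hL : m ∣ᵣ φ (.ofList x) := by
      rw [rightDvd_iff_op_dvd_op]
      simpa [reverseHom, FreeMonoid.reverse] using hK₂m _ h₂
    exact hM.eq_of_dvd_of_rightDvd (dvd_of_dvd_of_twoSidedDvd (hK₁m x h₁) (hK₃m x h₃)) hL

end Schutzenberger

theorem iff_succ_of_periodic_of_eventually_imp {s : ℕ → Prop} {a p : ℕ} (hp : p ≠ 0)
    (hper : ∀ n ≥ a, s (n + p) ↔ s n) (hmono : ∃ N, ∀ n > N, s n → s (n + 1)) :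
    s (a + 1) ↔ s a := by
  obtain ⟨N, hN⟩ := hmono
  have hper' : ∀ n ≥ a, ∀ t, s (n + p * t) ↔ s n := by
    intro n hn t
    induction t with
    | zero => simp
    | succ t ih => rw [Nat.mul_succ, ← add_assoc, hper _ (by omega), ih]
  have hclimb : ∀ n > N, ∀ j, s n → s (n + j) := by
    intro n hn j hs
    induction j with
    | zero => exact hs
    | succ j ih => exact hN (n + j) (by omega) ih
  have hb : N < a + p * (N + 1) := by nlinarith [Nat.one_le_iff_ne_zero.2 hp]
  rw [← hper' (a + 1) (by omega) (N + 1), ← hper' a le_rfl (N + 1)]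
  constructor
  · intro h
    have := hclimb _ (by omega) (p - 1) h
    rwa [show a + 1 + p * (N + 1) + (p - 1) = a + p * (N + 1) + p by omega,
      hper _ (by omega)] at this
  · intro h
    simpa [add_right_comm] using hN _ hb h

namespace Language

variable {A : Type*} (L : Language A)

def syntacticCon : Con (FreeMonoid A) where
  r x y := ∀ u, L.leftQuotient (u ++ x.toList) = L.leftQuotient (u ++ y.toList)
  iseqv := ⟨fun _ _ => rfl, fun h u => (h u).symm, fun h₁ h₂ u => (h₁ u).trans (h₂ u)⟩
  mul' {x y x' y'} h h' u := by
    calc L.leftQuotient (u ++ (x * x').toList)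
        = (L.leftQuotient (u ++ x.toList)).leftQuotient x'.toList := by
          rw [FreeMonoid.toList_mul, ← List.append_assoc, leftQuotient_append]
      _ = L.leftQuotient (u ++ y.toList ++ x'.toList) := by rw [h u, ← leftQuotient_append]
      _ = L.leftQuotient (u ++ (y * y').toList) := by
          rw [h', FreeMonoid.toList_mul, List.append_assoc]

abbrev SyntacticMonoid := (syntacticCon L).Quotient

variable {L}

theorem syntacticCon_iff {x y : FreeMonoid A} :
    syntacticCon L x y ↔ ∀ u w, u ++ x.toList ++ w ∈ L ↔ u ++ y.toList ++ w ∈ L :=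
  forall_congr' fun _ => Set.ext_iff

theorem IsRegular.finite_syntacticMonoid (hL : L.IsRegular) : Finite L.SyntacticMonoid := by
  have := hL.finite_range_leftQuotient.to_subtype
  let act (x : FreeMonoid A) (K : Set.range L.leftQuotient) : Set.range L.leftQuotient :=
    ⟨K.1.leftQuotient x.toList, by
      obtain ⟨u, hu⟩ := K.2
      exact ⟨u ++ x.toList, by rw [leftQuotient_append, hu]⟩⟩
  have hact : ∀ x y, act x = act y ↔ syntacticCon L x y := by
    intro x y
    simp only [funext_iff, Subtype.ext_iff, Subtype.forall, Set.forall_mem_range, act,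
      ← leftQuotient_append]
    rfl
  exact Finite.of_injective (fun z : L.SyntacticMonoid => z.liftOn act fun x y => (hact x y).2)
    fun z w => Con.induction_on₂ z w fun x y h => (Con.eq _).2 ((hact x y).1 h)

theorem coe_pow_eq_coe_pow_iff {v : FreeMonoid A} {a b : ℕ} :
    (v : L.SyntacticMonoid) ^ a = (v : L.SyntacticMonoid) ^ b ↔
      ∀ u w, u ++ wpow v.toList a ++ w ∈ L ↔ u ++ wpow v.toList b ++ w ∈ L := by
  change ((v ^ a : FreeMonoid A) : L.SyntacticMonoid) = (v ^ b : FreeMonoid A) ↔ _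
  rw [Con.eq, syntacticCon_iff]
  simp only [toList_pow_eq_wpow]

theorem isAperiodic_syntacticMonoid [Finite L.SyntacticMonoid]
    (hL : ∀ u v w : List A, ∃ N, ∀ n > N,
      u ++ wpow v n ++ w ∈ L → u ++ wpow v (n + 1) ++ w ∈ L) :
    IsAperiodic L.SyntacticMonoid := by
  intro z
  induction z using Con.induction_on with
  | _ v =>
  obtain ⟨k, hk, hidem⟩ := exists_isIdempotentElem_pow (v : L.SyntacticMonoid)
  have hper : ∀ n ≥ k, (v : L.SyntacticMonoid) ^ (n + k) = (v : L.SyntacticMonoid) ^ n :=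
    fun n hn => by simpa using pow_add_mul_eq_pow (by rw [pow_add]; exact hidem.eq) hn 1
  refine ⟨k, coe_pow_eq_coe_pow_iff.2 fun u w => ?_⟩
  exact iff_succ_of_periodic_of_eventually_imp hk
    (fun n hn => coe_pow_eq_coe_pow_iff.1 (hper n hn) u w) (hL u v.toList w)

theorem starFree_of_isAperiodic_syntacticMonoid [Finite A] [Finite L.SyntacticMonoid]
    (hM : IsAperiodic L.SyntacticMonoid) : StarFree L := by
  refine starFree_of_forall_fiber (syntacticCon L).mk' (fun x y hxy hx => ?_)
    (starFree_fiber hM _)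
  have := syntacticCon_iff.1 ((Con.eq _).1 hxy) [] []
  simpa using this.1 (by simpa using hx)

end Language

/-- If a regular language `L` is not star-free, then there are fixed words
`u,v,w` such that for every `N` there is `n > N` with `u v^n w ∈ L` but
`u v^(n+1) w ∉ L`. -/
theorem stmt2 {A : Type*} [Fintype A] (L : Language A) (hreg : L.IsRegular)
    (h : ¬ StarFree L) :
    ∃ u v w : List A, ∀ N : ℕ, ∃ n > N,
      u ++ wpow v n ++ w ∈ L ∧ u ++ wpow v (n + 1) ++ w ∉ L := by
  by_contra hL
  push Not at hL
  have := hreg.finite_syntacticMonoid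
  exact h (Language.starFree_of_isAperiodic_syntacticMonoid
    (Language.isAperiodic_syntacticMonoid hL))
end

section
/- In the group G = ⟨a,b,c,d,r,s | ba²d = rcs, bd = s⟩ (free on a,b,c,d), for every k ≥ 0 the word b a^(2k+1) d is geodesic with respect to the generating set {a,b,c,d,r,s} and their inverses. -/
open FreeGroup in
/-- The relators of the presentation `⟨a,b,c,d,r,s ∣ ba²d = rcs, bd = s⟩`,
with generators indexed `a=0, b=1, c=2, d=3, r=4, s=5`. -/
def rels : Set (FreeGroup (Fin 6)) :=
  { (of 1 * of 0 * of 0 * of 3) * (of 4 * of 2 * of 5)⁻¹,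
    (of 1 * of 3) * (of 5)⁻¹ }

/-- The group `G = ⟨a,b,c,d,r,s ∣ ba²d = rcs, bd = s⟩`. -/
abbrev Gp : Type := PresentedGroup rels

/-- The element of the monoid `G` represented by a word over the alphabet `A`,
where `ev` sends each letter to the corresponding generator. -/
def evalWord {G A : Type*} [Monoid G] (ev : A → G) (w : List A) : G :=
  (w.map ev).prod

/-- A word is geodesic if no shorter word represents the same element. -/
def IsGeodesic {G A : Type*} [Monoid G] (ev : A → G) (w : List A) : Prop :=
  ∀ w' : List A, evalWord ev w' = evalWord ev w → w.length ≤ w'.length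

/-- The inverse-closed alphabet on the six generators: `(i, true)` is the
generator `i` and `(i, false)` is its inverse. -/
def ev6 : Fin 6 × Bool → Gp :=
  fun p => cond p.2 (PresentedGroup.of p.1) (PresentedGroup.of p.1)⁻¹

/-- The positive letter for generator `i`. -/
def gl (i : Fin 6) : Fin 6 × Bool := (i, true)

/-!
Eliminating the relations, `G` is free on `a, b, c, d` with `r = b a² b⁻¹ c⁻¹` and `s = b d`.
The character with values `(2, 1, 2, 1, 2, 2)` on `(a, b, c, d, r, s)` takes the value
`2n + 2` on `b aⁿ d`, and every letter has weight at most `2`, with equality exactly for the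
positive letters `a, c, r, s`. So a word of length at most `n + 1` representing `b aⁿ d` is a
positive word in `a, c, r, s`. In the infinite dihedral group, with `a` acting as `x ↦ x - 1`
and `b, d` as `x ↦ -x`, such a word acts as a translation by `-#a + 2 #r`, while `b aⁿ d` acts
as translation by `n`; the `a`-exponent sum `#a + 2 #r` is also `n`. Adding, `4 #r = 2n`, so
`n` is even.
-/

open DihedralGroup

section Words

variable {G A : Type*} [Monoid G] (ev : A → G)

@[simp]
lemma evalWord_nil : evalWord ev [] = 1 := rfl

@[simp]
lemma evalWord_cons (x : A) (w : List A) : evalWord ev (x :: w) = ev x * evalWord ev w :=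
  List.prod_cons

@[simp]
lemma evalWord_append (w w' : List A) :
    evalWord ev (w ++ w') = evalWord ev w * evalWord ev w' := by
  simp [evalWord]

@[simp]
lemma evalWord_replicate (n : ℕ) (x : A) : evalWord ev (List.replicate n x) = ev x ^ n := by
  simp [evalWord]

lemma map_evalWord {H : Type*} [Monoid H] (φ : G →* H) (w : List A) :
    φ (evalWord ev w) = evalWord (φ ∘ ev) w := by
  simp [evalWord, map_list_prod]

lemma toAdd_evalWord {M : Type*} [AddMonoid M] (f : A → M) (w : List A) :
    (evalWord (Multiplicative.ofAdd ∘ f) w).toAdd = (w.map f).sum := by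
  induction w with
  | nil => rfl
  | cons x w ih => simp [ih]

end Words

lemma evalWord_eq_r_sum {A : Type*} {n : ℕ} {ev : A → DihedralGroup n} (f : A → ZMod n) {w : List A}
    (hw : ∀ x ∈ w, ev x = r (f x)) : evalWord ev w = r (w.map f).sum := by
  induction w with
  | nil => rfl
  | cons x w ih =>
    simp only [evalWord_cons, List.map_cons, List.sum_cons, hw x List.mem_cons_self,
      ih fun y hy => hw y (List.mem_cons_of_mem x hy), r_mul_r]

lemma forall_eq_of_length_nsmul_le_sum_map {A : Type*} {f : A → ℤ} {m : ℤ} (hle : ∀ x, f x ≤ m)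
    {w : List A} (hsum : w.length • m ≤ (w.map f).sum) : ∀ x ∈ w, f x = m := by
  induction w with
  | nil => simp
  | cons y w ih =>
    have hw := List.sum_le_card_nsmul (w.map f) m (by simpa using fun x _ => hle x)
    simp only [List.length_cons, List.map_cons, List.sum_cons, succ_nsmul, List.length_map] at hsum hw
    intro x hx
    rcases List.mem_cons.mp hx with rfl | hx
    · linarith [hle x]
    · exact ih (by linarith [hle y]) x hx

def letterWeight (v : Fin 6 → ℤ) (ℓ : Fin 6 × Bool) : ℤ := cond ℓ.2 (v ℓ.1) (-v ℓ.1)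

def weightHom (v : Fin 6 → ℤ) (h₁ : v 1 + v 0 + v 0 + v 3 = v 4 + v 2 + v 5)
    (h₂ : v 1 + v 3 = v 5) : Gp →* Multiplicative ℤ :=
  PresentedGroup.toGroup (f := fun i => Multiplicative.ofAdd (v i)) <| by
    rintro _ (rfl | rfl | ⟨⟩) <;>
    · apply Multiplicative.toAdd.injective
      simp only [map_mul, map_inv, FreeGroup.lift_apply_of, toAdd_mul, toAdd_inv, toAdd_ofAdd,
        toAdd_one]
      omega

lemma sum_letterWeight_eq_of_evalWord_eq (v : Fin 6 → ℤ)
    (h₁ : v 1 + v 0 + v 0 + v 3 = v 4 + v 2 + v 5) (h₂ : v 1 + v 3 = v 5)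
    {w w' : List (Fin 6 × Bool)} (h : evalWord ev6 w = evalWord ev6 w') :
    (w.map (letterWeight v)).sum = (w'.map (letterWeight v)).sum := by
  have hev : weightHom v h₁ h₂ ∘ ev6 = Multiplicative.ofAdd ∘ letterWeight v := by
    ext ⟨i, _ | _⟩ <;> simp [weightHom, ev6, letterWeight, PresentedGroup.toGroup.of]
  rw [← toAdd_evalWord, ← toAdd_evalWord, ← hev, ← map_evalWord, ← map_evalWord, h]

/-- The word `b aⁿ d`. -/
def baPowD (n : ℕ) : List (Fin 6 × Bool) := gl 1 :: (List.replicate n (gl 0) ++ [gl 3])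

lemma sum_letterWeight_baPowD (v : Fin 6 → ℤ) (n : ℕ) :
    ((baPowD n).map (letterWeight v)).sum = v 1 + n * v 0 + v 3 := by
  simp only [baPowD, gl, letterWeight, List.map_cons, List.map_append, List.map_replicate,
    List.map_nil, List.sum_cons, List.sum_append, List.sum_replicate, List.sum_nil, cond_true,
    nsmul_eq_mul]
  ring

lemma forall_mem_positive_of_evalWord_eq_baPowD {n : ℕ} {w : List (Fin 6 × Bool)}
    (hw : evalWord ev6 w = evalWord ev6 (baPowD n)) (hlen : w.length ≤ n + 1) :
    ∀ ℓ ∈ w, ℓ ∈ [gl 0, gl 2, gl 4, gl 5] := by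
  have hsum : (w.map (letterWeight ![2, 1, 2, 1, 2, 2])).sum = 2 * n + 2 := by
    rw [sum_letterWeight_eq_of_evalWord_eq _ (by decide) (by decide) hw, sum_letterWeight_baPowD]
    simp only [Matrix.cons_val_one, Matrix.cons_val_zero, Matrix.cons_val]
    ring
  have hall := forall_eq_of_length_nsmul_le_sum_map
    (by decide : ∀ ℓ, letterWeight ![2, 1, 2, 1, 2, 2] ℓ ≤ 2) (w := w) (by rw [hsum, nsmul_eq_mul]; omega)
  exact fun ℓ hℓ => (by decide : ∀ ℓ, letterWeight ![2, 1, 2, 1, 2, 2] ℓ = 2 →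
    ℓ ∈ [gl 0, gl 2, gl 4, gl 5]) ℓ (hall ℓ hℓ)

/-- As isometries of `ℤ`: `a ↦ (x ↦ x - 1)`, `b, d ↦ (x ↦ -x)`, `c, s ↦ id`, `r ↦ (x ↦ x + 2)`. -/
def toDihedral : Gp →* DihedralGroup 0 :=
  PresentedGroup.toGroup (f := ![r (-1), sr 0, 1, sr 0, r 2, 1]) <| by
    rintro _ (rfl | rfl | ⟨⟩)
    · simp [sr_mul_r, r_mul_r, sr_mul_sr, ← r_zero]
      norm_num
    · simp [sr_mul_sr]

lemma toDihedral_evalWord_baPowD (n : ℕ) : toDihedral (evalWord ev6 (baPowD n)) = r n := by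
  simp [baPowD, toDihedral, ev6, gl, PresentedGroup.toGroup.of, r_pow, sr_mul_sr]

lemma toDihedral_evalWord_of_forall_mem_positive {w : List (Fin 6 × Bool)}
    (hw : ∀ ℓ ∈ w, ℓ ∈ [gl 0, gl 2, gl 4, gl 5]) :
    toDihedral (evalWord ev6 w) = r (w.map (letterWeight ![-1, 0, 0, 0, 2, 0])).sum := by
  rw [map_evalWord]
  refine evalWord_eq_r_sum _ fun ℓ hℓ => ?_
  obtain rfl | rfl | rfl | rfl := by simpa using hw ℓ hℓ
  all_goals rfl

theorem isGeodesic_baPowD {n : ℕ} (hn : Odd n) : IsGeodesic ev6 (baPowD n) := by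
  intro w hw
  by_contra! hlen
  have hpos := forall_mem_positive_of_evalWord_eq_baPowD hw (by simpa [baPowD] using hlen)
  have hshift : (w.map (letterWeight ![-1, 0, 0, 0, 2, 0])).sum = n := by
    have := toDihedral_evalWord_of_forall_mem_positive hpos
    rw [hw, toDihedral_evalWord_baPowD] at this
    exact (r.inj this).symm
  have hexp : (w.map (letterWeight ![1, 0, 0, 0, 2, 0])).sum = n := by
    rw [sum_letterWeight_eq_of_evalWord_eq _ (by decide) (by decide) hw, sum_letterWeight_baPowD]
    simp
  have hdvd : (4 : ℤ) ∣ (w.map fun ℓ => letterWeight ![1, 0, 0, 0, 2, 0] ℓ +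
      letterWeight ![-1, 0, 0, 0, 2, 0] ℓ).sum :=
    List.dvd_sum <| List.forall_mem_map.2 fun ℓ _ => (by decide : ∀ ℓ, (4 : ℤ) ∣
      letterWeight ![1, 0, 0, 0, 2, 0] ℓ + letterWeight ![-1, 0, 0, 0, 2, 0] ℓ) ℓ
  rw [List.sum_map_add, hexp, hshift] at hdvd
  obtain ⟨m, rfl⟩ := hn
  omega

/-- For every `k ≥ 0`, the word `b a^(2k+1) d` is geodesic with respect to
the generating set `{a,b,c,d,r,s}` and their inverses. -/
theorem stmt11 (k : ℕ) :
    IsGeodesic ev6 (gl 1 :: (List.replicate (2 * k + 1) (gl 0) ++ [gl 3])) :=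
  isGeodesic_baPowD (odd_two_mul_add_one k)
end
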